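/- arXiv:2202.07213 — 4 statements merged into one kernel-verified Lean document; each statement's English description precedes it below -/
import Mathlib

section
/- Let S, H, K be complex Hilbert spaces, A ∈ B(S, K) and B ∈ B(H, K). There exists a contraction Z ∈ B(S, H) (i.e., ‖Z‖ ≤ 1) satisfying A = B Z if and only if A A* ≤ B B* (as self-adjoint operators on K). -/
/-!
`A A* ≤ B B*` says exactly that `‖A* k‖ ≤ ‖B* k‖` for every `k`. Hence `B* k ↦ A* k` is a
well-defined contraction on the range of `B*`; it extends by continuity to the closure of that
range and by zero on its orthogonal complement, and the adjoint of this extension is `Z`.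
Conversely `‖(B Z)* k‖ = ‖Z* B* k‖ ≤ ‖B* k‖` when `‖Z‖ ≤ 1`.
-/

open ContinuousLinearMap
open scoped NNReal

theorem LinearMap.exists_comp_rangeRestrict_eq_of_ker_le {R M N P : Type*} [Ring R]
    [AddCommGroup M] [AddCommGroup N] [AddCommGroup P] [Module R M] [Module R N] [Module R P]
    (p : M →ₗ[R] N) (q : M →ₗ[R] P) (h : LinearMap.ker p ≤ LinearMap.ker q) :
    ∃ T : LinearMap.range p →ₗ[R] P, T ∘ₗ p.rangeRestrict = q :=
  ⟨(LinearMap.ker p).liftQ q h ∘ₗ p.quotKerEquivRange.symm.toLinearMap, by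
    ext k
    exact congrArg ((LinearMap.ker p).liftQ q h) (p.quotKerEquivRange_symm_apply_image k _)⟩

theorem LinearMap.exists_norm_le_one_comp_rangeRestrict_eq_of_norm_le {𝕜 K H S : Type*}
    [NontriviallyNormedField 𝕜] [AddCommGroup K] [Module 𝕜 K]
    [NormedAddCommGroup H] [NormedSpace 𝕜 H] [NormedAddCommGroup S] [NormedSpace 𝕜 S]
    (p : K →ₗ[𝕜] H) (q : K →ₗ[𝕜] S) (h : ∀ k, ‖q k‖ ≤ ‖p k‖) :
    ∃ T : LinearMap.range p →L[𝕜] S, ‖T‖ ≤ 1 ∧ ∀ k, T (p.rangeRestrict k) = q k := by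
  have hker : LinearMap.ker p ≤ LinearMap.ker q := fun k hk =>
    norm_le_zero_iff.1 <| (h k).trans_eq <| by rw [LinearMap.mem_ker.1 hk, norm_zero]
  obtain ⟨T, hT⟩ := p.exists_comp_rangeRestrict_eq_of_ker_le q hker
  have hTp (k : K) : T (p.rangeRestrict k) = q k := by rw [← hT]; rfl
  have hbound (x : LinearMap.range p) : ‖T x‖ ≤ 1 * ‖x‖ := by
    obtain ⟨k, rfl⟩ := p.surjective_rangeRestrict x
    rw [hTp, one_mul]
    exact h k
  exact ⟨T.mkContinuous 1 hbound, T.mkContinuous_norm_le zero_le_one hbound, hTp⟩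

section Hilbert

variable {𝕜 E F G : Type*} [RCLike 𝕜]
  [NormedAddCommGroup E] [InnerProductSpace 𝕜 E] [CompleteSpace E]
  [NormedAddCommGroup F] [InnerProductSpace 𝕜 F] [CompleteSpace F]

theorem ContinuousLinearMap.isPositive_comp_adjoint_sub_comp_adjoint_iff [NormedAddCommGroup G]
    [InnerProductSpace 𝕜 G] [CompleteSpace G] (A : E →L[𝕜] G) (B : F →L[𝕜] G) :
    (B ∘L adjoint B - A ∘L adjoint A).IsPositive ↔ ∀ x, ‖adjoint A x‖ ≤ ‖adjoint B x‖ := by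
  have hsa : IsSelfAdjoint (B ∘L adjoint B - A ∘L adjoint A) :=
    (isPositive_self_comp_adjoint B).isSelfAdjoint.sub
      (isPositive_self_comp_adjoint A).isSelfAdjoint
  have hre (x : G) : (B ∘L adjoint B - A ∘L adjoint A).reApplyInnerSelf x =
      ‖adjoint B x‖ ^ 2 - ‖adjoint A x‖ ^ 2 := by
    rw [apply_norm_sq_eq_inner_adjoint_left, apply_norm_sq_eq_inner_adjoint_left,
      adjoint_adjoint, adjoint_adjoint, reApplyInnerSelf, sub_apply, inner_sub_left, map_sub]
  simp only [isPositive_def', hsa, true_and, hre, sub_nonneg,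
    sq_le_sq₀ (norm_nonneg _) (norm_nonneg _)]

variable [NormedAddCommGroup G] [NormedSpace 𝕜 G] [CompleteSpace G]

theorem Submodule.exists_extension_norm_le (U : Submodule 𝕜 E) (f : U →L[𝕜] G) :
    ∃ T : E →L[𝕜] G, ‖T‖ ≤ ‖f‖ ∧ ∀ x : U, T x = f x := by
  set M := U.topologicalClosure
  let e : U →L[𝕜] M := U.subtypeL.codRestrict M fun x => U.le_topologicalClosure x.2
  have he (x : U) : ‖x‖ ≤ (1 : ℝ≥0) * ‖e x‖ := by simp [e]
  have hdense : DenseRange e :=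
    (denseRange_inclusion_iff U.le_topologicalClosure).2 U.topologicalClosure_coe.subset
  refine ⟨f.extend e ∘L M.orthogonalProjectionOnto, ?_, fun x => ?_⟩
  · calc ‖f.extend e ∘L M.orthogonalProjectionOnto‖
          ≤ ‖f.extend e‖ * ‖M.orthogonalProjectionOnto‖ := opNorm_comp_le _ _
      _ ≤ ‖f‖ * 1 := by
          gcongr
          · simpa using f.opNorm_extend_le hdense he
          · exact M.orthogonalProjectionOnto_norm_le
      _ = ‖f‖ := mul_one _
  · have hx : M.orthogonalProjectionOnto x = e x :=
      M.orthogonalProjectionOnto_mem_subspace_eq_self (e x)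
    rw [comp_apply, hx, extend_eq _ hdense (isUniformEmbedding_of_bound _ he).isUniformInducing]

theorem ContinuousLinearMap.exists_norm_le_one_eq_comp_iff {K : Type*} [NormedAddCommGroup K]
    [NormedSpace 𝕜 K] (p : K →L[𝕜] E) (q : K →L[𝕜] G) :
    (∃ T : E →L[𝕜] G, ‖T‖ ≤ 1 ∧ q = T ∘L p) ↔ ∀ k, ‖q k‖ ≤ ‖p k‖ := by
  constructor
  · rintro ⟨T, hT, rfl⟩ k
    exact (T.le_opNorm _).trans (mul_le_of_le_one_left (norm_nonneg _) hT)
  · intro h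
    obtain ⟨T₀, hT₀, hT₀p⟩ :=
      (p : K →ₗ[𝕜] E).exists_norm_le_one_comp_rangeRestrict_eq_of_norm_le (q : K →ₗ[𝕜] G) h
    obtain ⟨T, hT, hTT₀⟩ := (LinearMap.range (p : K →ₗ[𝕜] E)).exists_extension_norm_le T₀
    exact ⟨T, hT.trans hT₀, ext fun k => ((hTT₀ _).trans (hT₀p k)).symm⟩

end Hilbert

open ContinuousLinearMap in
theorem douglas_factorization_contraction {S H K : Type*}
    [NormedAddCommGroup S] [InnerProductSpace ℂ S] [CompleteSpace S]
    [NormedAddCommGroup H] [InnerProductSpace ℂ H] [CompleteSpace H]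
    [NormedAddCommGroup K] [InnerProductSpace ℂ K] [CompleteSpace K]
    (A : S →L[ℂ] K) (B : H →L[ℂ] K) :
    (∃ Z : S →L[ℂ] H, ‖Z‖ ≤ 1 ∧ A = B ∘L Z) ↔
      (B ∘L adjoint B - A ∘L adjoint A).IsPositive := by
  rw [isPositive_comp_adjoint_sub_comp_adjoint_iff, ← exists_norm_le_one_eq_comp_iff]
  constructor
  · rintro ⟨Z, hZ, rfl⟩
    exact ⟨adjoint Z, by rwa [LinearIsometryEquiv.norm_map], adjoint_comp B Z⟩
  · rintro ⟨T, hT, hAT⟩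
    refine ⟨adjoint T, by rwa [LinearIsometryEquiv.norm_map], ?_⟩
    rw [← adjoint_adjoint A, hAT, adjoint_comp, adjoint_adjoint]
end

section
/- Let T1 ∈ B(H1, H1') and T2 ∈ B(H2, H2') be contractions on complex Hilbert spaces, and X ∈ B(H1, H2'). Then the block operator Y = [[T1, 0], [X, T2]] : H1 ⊕ H2 → H1' ⊕ H2' is a contraction if and only if X = D_{T2*} C D_{T1} for some contraction C : H1 → H2', where D_{T1} = (I − T1* T1)^{1/2} and D_{T2*} = (I − T2 T2*)^{1/2}. -/
open ContinuousLinearMap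

/-- The lower-triangular block operator `[[f, 0], [g, h]]` on the Hilbert (ℓ²) direct sum. -/
noncomputable def blockLowerTriangular {E1 E2 F1 F2 : Type*}
    [NormedAddCommGroup E1] [NormedSpace ℂ E1] [NormedAddCommGroup E2] [NormedSpace ℂ E2]
    [NormedAddCommGroup F1] [NormedSpace ℂ F1] [NormedAddCommGroup F2] [NormedSpace ℂ F2]
    (f : E1 →L[ℂ] F1) (g : E1 →L[ℂ] F2) (h : E2 →L[ℂ] F2) :
    WithLp 2 (E1 × E2) →L[ℂ] WithLp 2 (F1 × F2) :=
  ((WithLp.prodContinuousLinearEquiv 2 ℂ F1 F2).symm : (F1 × F2) →L[ℂ] WithLp 2 (F1 × F2)) ∘L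
    ((f ∘L fst ℂ E1 E2).prod (g ∘L fst ℂ E1 E2 + h ∘L snd ℂ E1 E2)) ∘L
      ((WithLp.prodContinuousLinearEquiv 2 ℂ E1 E2) : WithLp 2 (E1 × E2) →L[ℂ] E1 × E2)

/-
Since `‖Y z‖² = ‖T₁ z₁‖² + ‖X z₁ + T₂ z₂‖²` and `‖D_{T₁} z₁‖² = ‖z₁‖² - ‖T₁ z₁‖²`, the operator `Y`
is a contraction iff the row `[X T₂]` is dominated by `diag(D_{T₁}, 1)`, pointwise in norm. By
Douglas' lemma this says `[X T₂] = L ∘ diag(D_{T₁}, 1)` for a row contraction `L = [C' T₂]`, i.e.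
`X = C' D_{T₁}`. Now `L L* ≤ 1` reads `C' C'* ≤ 1 - T₂ T₂* = D_{T₂*}²`, so Douglas' lemma again
gives `C'* = K D_{T₂*}` with `‖K‖ ≤ 1`, whence `X = D_{T₂*} K* D_{T₁}`. Conversely `[D_{T₂*} T₂]`
is a coisometry, so `[X T₂] = [D_{T₂*} T₂] ∘ diag(C, 1) ∘ diag(D_{T₁}, 1)` is dominated by
`diag(D_{T₁}, 1)`.
-/

theorem ContinuousLinearMap.opNorm_le_one_iff_norm_apply_sq_le {𝕜 E F : Type*}
    [NontriviallyNormedField 𝕜] [SeminormedAddCommGroup E] [NormedSpace 𝕜 E]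
    [SeminormedAddCommGroup F] [NormedSpace 𝕜 F] (T : E →L[𝕜] F) :
    ‖T‖ ≤ 1 ↔ ∀ x, ‖T x‖ ^ 2 ≤ ‖x‖ ^ 2 := by
  simp only [opNorm_le_iff zero_le_one, one_mul, sq_le_sq₀ (norm_nonneg _) (norm_nonneg _)]

section Row

variable {𝕜 E F G : Type*} [NontriviallyNormedField 𝕜]
    [NormedAddCommGroup E] [NormedSpace 𝕜 E] [NormedAddCommGroup F] [NormedSpace 𝕜 F]
    [NormedAddCommGroup G] [NormedSpace 𝕜 G]

noncomputable def rowOp (R : E →L[𝕜] G) (S : F →L[𝕜] G) : WithLp 2 (E × F) →L[𝕜] G :=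
  R.coprod S ∘L (WithLp.prodContinuousLinearEquiv 2 𝕜 E F : WithLp 2 (E × F) →L[𝕜] E × F)

@[simp]
theorem rowOp_apply (R : E →L[𝕜] G) (S : F →L[𝕜] G) (z : WithLp 2 (E × F)) :
    rowOp R S z = R z.fst + S z.snd :=
  rfl

theorem exists_eq_rowOp (L : WithLp 2 (E × F) →L[𝕜] G) : ∃ R S, L = rowOp R S := by
  let toL2 : E × F →L[𝕜] WithLp 2 (E × F) := (WithLp.prodContinuousLinearEquiv 2 𝕜 E F).symm
  refine ⟨L ∘L toL2 ∘L inl 𝕜 E F, L ∘L toL2 ∘L inr 𝕜 E F, ?_⟩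
  ext z
  simp only [rowOp_apply, comp_apply, ← map_add]
  refine congrArg L (WithLp.ofLp_injective 2 ?_)
  ext <;> simp [toL2]

theorem rowOp_inj {R R' : E →L[𝕜] G} {S S' : F →L[𝕜] G} :
    rowOp R S = rowOp R' S' ↔ R = R' ∧ S = S' := by
  refine ⟨fun h => ⟨?_, ?_⟩, fun h => h.1 ▸ h.2 ▸ rfl⟩ <;> ext x
  · simpa using congr(($h) (WithLp.toLp 2 (x, 0)))
  · simpa using congr(($h) (WithLp.toLp 2 (0, x)))

end Row

section RowAdjoint

variable {𝕜 E F G : Type*} [RCLike 𝕜]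
    [NormedAddCommGroup E] [InnerProductSpace 𝕜 E] [CompleteSpace E]
    [NormedAddCommGroup F] [InnerProductSpace 𝕜 F] [CompleteSpace F]
    [NormedAddCommGroup G] [InnerProductSpace 𝕜 G] [CompleteSpace G]

theorem adjoint_rowOp_apply (R : E →L[𝕜] G) (S : F →L[𝕜] G) (y : G) :
    adjoint (rowOp R S) y = WithLp.toLp 2 (adjoint R y, adjoint S y) := by
  refine ext_inner_left 𝕜 fun z => ?_
  simp [adjoint_inner_right, inner_add_left]

theorem norm_rowOp_le_one_iff (R : E →L[𝕜] G) (S : F →L[𝕜] G) :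
    ‖rowOp R S‖ ≤ 1 ↔ ∀ y, ‖adjoint R y‖ ^ 2 + ‖adjoint S y‖ ^ 2 ≤ ‖y‖ ^ 2 := by
  rw [← LinearIsometryEquiv.norm_map adjoint, opNorm_le_one_iff_norm_apply_sq_le]
  simp [adjoint_rowOp_apply, WithLp.prod_norm_sq_eq_of_L2]

end RowAdjoint

/-- Douglas' factorization lemma. `C` is `B x ↦ A x` on the range of `B`, extended by continuity to
its closure and by `0` on the orthogonal complement. -/
theorem ContinuousLinearMap.exists_norm_le_one_comp_eq_of_norm_apply_le
    {𝕜 E F G : Type*} [RCLike 𝕜]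
    [NormedAddCommGroup E] [NormedSpace 𝕜 E]
    [NormedAddCommGroup F] [InnerProductSpace 𝕜 F] [CompleteSpace F]
    [NormedAddCommGroup G] [NormedSpace 𝕜 G] [CompleteSpace G]
    (A : E →L[𝕜] G) (B : E →L[𝕜] F) (hAB : ∀ x, ‖A x‖ ≤ ‖B x‖) :
    ∃ C : F →L[𝕜] G, ‖C‖ ≤ 1 ∧ C ∘L B = A := by
  set K := (LinearMap.range (B : E →ₗ[𝕜] F)).topologicalClosure
  have hBK : ∀ x, B x ∈ K := fun x => Submodule.le_topologicalClosure _ ⟨x, rfl⟩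
  set e : E →ₗ[𝕜] K := (B : E →ₗ[𝕜] F).codRestrict K hBK
  have he : DenseRange e := by
    rw [DenseRange, Subtype.dense_iff, ← Set.range_comp]
    exact (Submodule.topologicalClosure_coe _).ge
  have hAe : ∀ x, ‖A x‖ ≤ 1 * ‖e x‖ := fun x => by rw [one_mul]; exact hAB x
  set Ψ := (A : E →ₗ[𝕜] G).extendOfNorm e
  refine ⟨Ψ ∘L K.orthogonalProjectionOnto, ?_, ?_⟩
  · calc ‖Ψ ∘L K.orthogonalProjectionOnto‖ ≤ ‖Ψ‖ * ‖K.orthogonalProjectionOnto‖ :=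
          opNorm_comp_le _ _
      _ ≤ 1 * 1 := by
          gcongr
          · exact LinearMap.opNorm_extendOfNorm_le he zero_le_one hAe
          · exact K.orthogonalProjectionOnto_norm_le
      _ = 1 := one_mul 1
  · ext x
    have : K.orthogonalProjectionOnto (B x) = e x :=
      K.orthogonalProjectionOnto_mem_subspace_eq_self ⟨B x, hBK x⟩
    simp only [comp_apply, this]
    exact LinearMap.extendOfNorm_eq he ⟨1, hAe⟩ x

section Defect

variable {H H' : Type*} [NormedAddCommGroup H] [InnerProductSpace ℂ H] [CompleteSpace H]
    [NormedAddCommGroup H'] [InnerProductSpace ℂ H'] [CompleteSpace H']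

theorem ContinuousLinearMap.norm_sqrt_apply_sq {a : H →L[ℂ] H} (ha : 0 ≤ a) (x : H) :
    ‖CFC.sqrt a x‖ ^ 2 = RCLike.re (inner ℂ (a x) x) := by
  have hsa : IsSelfAdjoint (CFC.sqrt a) := (CFC.sqrt_nonneg a).isSelfAdjoint
  conv_rhs => rw [← CFC.sqrt_mul_sqrt_self a ha]
  rw [mul_apply_eq_comp, ← adjoint_inner_right, hsa.adjoint_eq,
    inner_self_eq_norm_sq (𝕜 := ℂ)]

theorem ContinuousLinearMap.one_sub_adjoint_comp_self_nonneg {T : H →L[ℂ] H'} (hT : ‖T‖ ≤ 1) :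
    0 ≤ 1 - adjoint T ∘L T := by
  rw [sub_nonneg, ← CStarAlgebra.norm_le_one_iff_of_nonneg _
    (nonneg_iff_isPositive _ |>.mpr (isPositive_adjoint_comp_self T)), norm_adjoint_comp_self]
  exact mul_le_one₀ hT (norm_nonneg T) hT

theorem ContinuousLinearMap.norm_sqrt_one_sub_adjoint_comp_self_apply_sq
    {T : H →L[ℂ] H'} (hT : ‖T‖ ≤ 1) (x : H) :
    ‖CFC.sqrt (1 - adjoint T ∘L T) x‖ ^ 2 = ‖x‖ ^ 2 - ‖T x‖ ^ 2 := by
  rw [norm_sqrt_apply_sq (one_sub_adjoint_comp_self_nonneg hT), sub_apply, one_apply_eq_self,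
    comp_apply, inner_sub_left, map_sub, adjoint_inner_left, inner_self_eq_norm_sq (𝕜 := ℂ),
    inner_self_eq_norm_sq (𝕜 := ℂ)]

theorem ContinuousLinearMap.norm_sqrt_one_sub_comp_adjoint_apply_sq
    {T : H →L[ℂ] H'} (hT : ‖T‖ ≤ 1) (y : H') :
    ‖CFC.sqrt (1 - T ∘L adjoint T) y‖ ^ 2 = ‖y‖ ^ 2 - ‖adjoint T y‖ ^ 2 := by
  simpa using norm_sqrt_one_sub_adjoint_comp_self_apply_sq (T := adjoint T) (by simpa using hT) y

theorem norm_rowOp_sqrt_one_sub_comp_adjoint_le_one {T : H →L[ℂ] H'} (hT : ‖T‖ ≤ 1) :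
    ‖rowOp (CFC.sqrt (1 - T ∘L adjoint T) : H' →L[ℂ] H') T‖ ≤ 1 := by
  refine (norm_rowOp_le_one_iff _ _).2 fun y => ?_
  rw [(CFC.sqrt_nonneg _).isSelfAdjoint.adjoint_eq, norm_sqrt_one_sub_comp_adjoint_apply_sq hT]
  linarith

end Defect

section Block

variable {E1 E2 F1 F2 : Type*}
    [NormedAddCommGroup E1] [NormedSpace ℂ E1] [NormedAddCommGroup E2] [NormedSpace ℂ E2]
    [NormedAddCommGroup F1] [NormedSpace ℂ F1] [NormedAddCommGroup F2] [NormedSpace ℂ F2]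

@[simp]
theorem blockLowerTriangular_apply (f : E1 →L[ℂ] F1) (g : E1 →L[ℂ] F2) (h : E2 →L[ℂ] F2)
    (z : WithLp 2 (E1 × E2)) :
    blockLowerTriangular f g h z = WithLp.toLp 2 (f z.fst, g z.fst + h z.snd) :=
  rfl

theorem norm_blockLowerTriangular_apply_sq (f : E1 →L[ℂ] F1) (g : E1 →L[ℂ] F2)
    (h : E2 →L[ℂ] F2) (z : WithLp 2 (E1 × E2)) :
    ‖blockLowerTriangular f g h z‖ ^ 2 = ‖f z.fst‖ ^ 2 + ‖g z.fst + h z.snd‖ ^ 2 :=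
  WithLp.prod_norm_sq_eq_of_L2 _

theorem norm_blockLowerTriangular_zero_id_le_one {f : E1 →L[ℂ] F1} (hf : ‖f‖ ≤ 1) :
    ‖blockLowerTriangular f (0 : E1 →L[ℂ] E2) (.id ℂ E2)‖ ≤ 1 := by
  refine (opNorm_le_one_iff_norm_apply_sq_le _).2 fun z => ?_
  rw [norm_blockLowerTriangular_apply_sq, WithLp.prod_norm_sq_eq_of_L2]
  have := f.le_of_opNorm_le hf z.fst
  simp only [zero_apply, id_apply, zero_add, one_mul] at this ⊢
  gcongr

theorem rowOp_comp_blockLowerTriangular {G : Type*} [NormedAddCommGroup G] [NormedSpace ℂ G]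
    (R : F1 →L[ℂ] G) (S : F2 →L[ℂ] G) (f : E1 →L[ℂ] F1) (g : E1 →L[ℂ] F2) (h : E2 →L[ℂ] F2) :
    rowOp R S ∘L blockLowerTriangular f g h = rowOp (R ∘L f + S ∘L g) (S ∘L h) := by
  ext z
  simp only [comp_apply, rowOp_apply, blockLowerTriangular_apply, add_apply, WithLp.toLp_fst,
    WithLp.toLp_snd, map_add, add_assoc]

end Block

theorem norm_blockLowerTriangular_le_one_iff {H1 H2 H1' H2' : Type*}
    [NormedAddCommGroup H1] [InnerProductSpace ℂ H1] [CompleteSpace H1]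
    [NormedAddCommGroup H1'] [InnerProductSpace ℂ H1'] [CompleteSpace H1']
    [NormedAddCommGroup H2] [NormedSpace ℂ H2] [NormedAddCommGroup H2'] [NormedSpace ℂ H2']
    {T1 : H1 →L[ℂ] H1'} (hT1 : ‖T1‖ ≤ 1) (X : H1 →L[ℂ] H2') (T2 : H2 →L[ℂ] H2') :
    ‖blockLowerTriangular T1 X T2‖ ≤ 1 ↔ ∀ z, ‖rowOp X T2 z‖ ≤
      ‖blockLowerTriangular (CFC.sqrt (1 - adjoint T1 ∘L T1)) (0 : H1 →L[ℂ] H2) (.id ℂ H2) z‖ := by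
  rw [opNorm_le_one_iff_norm_apply_sq_le]
  refine forall_congr' fun z => ?_
  rw [← sq_le_sq₀ (norm_nonneg _) (norm_nonneg _), norm_blockLowerTriangular_apply_sq,
    norm_blockLowerTriangular_apply_sq, WithLp.prod_norm_sq_eq_of_L2 z,
    norm_sqrt_one_sub_adjoint_comp_self_apply_sq hT1, rowOp_apply]
  simp only [zero_apply, id_apply, zero_add]
  constructor <;> intro h <;> linarith

theorem block_contraction_iff_defect_factorization {H1 H2 H1' H2' : Type*}
    [NormedAddCommGroup H1] [InnerProductSpace ℂ H1] [CompleteSpace H1]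
    [NormedAddCommGroup H2] [InnerProductSpace ℂ H2] [CompleteSpace H2]
    [NormedAddCommGroup H1'] [InnerProductSpace ℂ H1'] [CompleteSpace H1']
    [NormedAddCommGroup H2'] [InnerProductSpace ℂ H2'] [CompleteSpace H2']
    (T1 : H1 →L[ℂ] H1') (T2 : H2 →L[ℂ] H2') (X : H1 →L[ℂ] H2')
    (hT1 : ‖T1‖ ≤ 1) (hT2 : ‖T2‖ ≤ 1) :
    ‖blockLowerTriangular T1 X T2‖ ≤ 1 ↔
      ∃ C : H1 →L[ℂ] H2', ‖C‖ ≤ 1 ∧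
        X = CFC.sqrt (1 - T2 ∘L adjoint T2) ∘L C ∘L CFC.sqrt (1 - adjoint T1 ∘L T1) := by
  set D1 := CFC.sqrt (1 - adjoint T1 ∘L T1)
  set D2 := CFC.sqrt (1 - T2 ∘L adjoint T2)
  rw [norm_blockLowerTriangular_le_one_iff hT1]
  constructor
  · intro hdom
    obtain ⟨L, hL, hLB⟩ := exists_norm_le_one_comp_eq_of_norm_apply_le _ _ hdom
    obtain ⟨C', S, rfl⟩ := exists_eq_rowOp L
    rw [rowOp_comp_blockLowerTriangular, rowOp_inj] at hLB
    obtain ⟨hX, rfl⟩ : C' ∘L D1 = X ∧ S = T2 := by simpa using hLB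
    have hC'D2 : ∀ y, ‖adjoint C' y‖ ≤ ‖D2 y‖ := fun y => by
      have := (norm_rowOp_le_one_iff _ _).1 hL y
      rw [← sq_le_sq₀ (norm_nonneg _) (norm_nonneg _), norm_sqrt_one_sub_comp_adjoint_apply_sq hT2]
      linarith
    obtain ⟨K, hK, hKD2⟩ := exists_norm_le_one_comp_eq_of_norm_apply_le _ _ hC'D2
    refine ⟨adjoint K, by simpa using hK, ?_⟩
    rw [← hX, ← adjoint_adjoint C', ← hKD2, adjoint_comp,
      (CFC.sqrt_nonneg _).isSelfAdjoint.adjoint_eq, comp_assoc]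
  · rintro ⟨C, hC, rfl⟩ z
    set B := blockLowerTriangular D1 (0 : H1 →L[ℂ] H2) (.id ℂ H2)
    set BC := blockLowerTriangular C (0 : H1 →L[ℂ] H2) (.id ℂ H2)
    calc ‖rowOp (D2 ∘L C ∘L D1) T2 z‖ = ‖rowOp D2 T2 (BC (B z))‖ := by simp [B, BC]
      _ ≤ ‖BC (B z)‖ := ((rowOp D2 T2).le_of_opNorm_le
          (norm_rowOp_sqrt_one_sub_comp_adjoint_le_one hT2) _).trans_eq (one_mul _)
      _ ≤ ‖B z‖ := (BC.le_of_opNorm_le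
          (norm_blockLowerTriangular_zero_id_le_one hC) _).trans_eq (one_mul _)
end

section
/- Let H0, H1, H2, K be complex Hilbert spaces and A_i ∈ B(H_i, K) for i = 0, 1, 2. There exist operators Z1 ∈ B(H0, H1) and Z2 ∈ B(H0, H2) satisfying A1 Z1 + A2 Z2 = A0 and Z1* Z1 + Z2* Z2 ≤ I_{H0} if and only if A1 A1* + A2 A2* ≥ A0 A0*. -/
/-!
Assemble `Z₁, Z₂` into a column `Z : H₀ → H₁ ⊕ H₂` and `A₁, A₂` into a row
`R = [A₁ A₂] : H₁ ⊕ H₂ → K`. Then `R Z = A₁ Z₁ + A₂ Z₂`, `Z* Z = Z₁* Z₁ + Z₂* Z₂` and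
`R R* = A₁ A₁* + A₂ A₂*`, so the theorem is Douglas' lemma for `R` and `A₀`: `A₀ = R Z` with
`‖Z‖ ≤ 1` iff `‖A₀* k‖ ≤ ‖R* k‖` for all `k`. For the nontrivial direction, `X (R* k) := A₀* k`
is a well-defined contraction on the range of `R*`; it extends continuously to the closure and by
zero on the orthogonal complement, and `Z := X*` works.
-/

namespace ContinuousLinearMap

variable {𝕜 : Type*} [RCLike 𝕜]

theorem exists_opNorm_le_comp_eq_of_norm_le {K E F : Type*}
    [NormedAddCommGroup K] [NormedSpace 𝕜 K]
    [NormedAddCommGroup E] [NormedSpace 𝕜 E] [CompleteSpace E]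
    [NormedAddCommGroup F] [InnerProductSpace 𝕜 F] [CompleteSpace F]
    {S : K →L[𝕜] E} {T : K →L[𝕜] F} {C : ℝ} (hC : 0 ≤ C) (h : ∀ k, ‖S k‖ ≤ C * ‖T k‖) :
    ∃ X : F →L[𝕜] E, ‖X‖ ≤ C ∧ X ∘L T = S := by
  set V := (LinearMap.range (T : K →ₗ[𝕜] F)).topologicalClosure
  have hV : ∀ k, T k ∈ V := fun k =>
    Submodule.le_topologicalClosure _ (LinearMap.mem_range_self _ k)
  have : CompleteSpace V := (Submodule.isClosed_topologicalClosure _).completeSpace_coe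
  let e : K →ₗ[𝕜] V := (T : K →ₗ[𝕜] F).codRestrict V hV
  have he : DenseRange e := by
    rw [DenseRange, Subtype.dense_iff, ← Set.range_comp]
    exact subset_of_eq (Submodule.topologicalClosure_coe _)
  refine ⟨(S : K →ₗ[𝕜] E).extendOfNorm e ∘L V.orthogonalProjectionOnto, ?_, ?_⟩
  · calc _ ≤ C * 1 := (opNorm_comp_le _ _).trans <| mul_le_mul
          (LinearMap.opNorm_extendOfNorm_le he hC h) V.orthogonalProjectionOnto_norm_le
          (norm_nonneg _) hC
      _ = C := mul_one C
  · ext k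
    have hproj : V.orthogonalProjectionOnto (T k) = e k :=
      V.orthogonalProjectionOnto_mem_subspace_eq_self (e k)
    simp [hproj, LinearMap.extendOfNorm_eq he ⟨C, h⟩]

section Adjoint

variable {E F G : Type*}
  [NormedAddCommGroup E] [InnerProductSpace 𝕜 E] [CompleteSpace E]
  [NormedAddCommGroup F] [InnerProductSpace 𝕜 F] [CompleteSpace F]
  [NormedAddCommGroup G] [InnerProductSpace 𝕜 G] [CompleteSpace G]

theorem isPositive_adjoint_comp_self_sub_iff (T : E →L[𝕜] F) (S : E →L[𝕜] G) :
    (adjoint T ∘L T - adjoint S ∘L S).IsPositive ↔ ∀ x, ‖S x‖ ≤ ‖T x‖ := by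
  have hsa : IsSelfAdjoint (adjoint T ∘L T - adjoint S ∘L S) :=
    (isPositive_adjoint_comp_self T).isSelfAdjoint.sub
      (isPositive_adjoint_comp_self S).isSelfAdjoint
  simp only [isPositive_def', hsa, true_and, reApplyInnerSelf_apply, sub_apply, inner_sub_left,
    map_sub, ← apply_norm_sq_eq_inner_adjoint_left, sub_nonneg]
  exact forall_congr' fun x => pow_le_pow_iff_left₀ (norm_nonneg _) (norm_nonneg _) two_ne_zero

theorem isPositive_one_sub_adjoint_comp_self_iff (Z : E →L[𝕜] F) :
    (1 - adjoint Z ∘L Z).IsPositive ↔ ‖Z‖ ≤ 1 := by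
  have h := isPositive_adjoint_comp_self_sub_iff (.id 𝕜 E) Z
  rw [adjoint_id, id_comp] at h
  rw [one_def, h, opNorm_le_iff zero_le_one]
  simp only [id_apply, one_mul]

theorem exists_comp_eq_opNorm_le_one_iff (A : E →L[𝕜] G) (B : F →L[𝕜] G) :
    (∃ Z : E →L[𝕜] F, B ∘L Z = A ∧ ‖Z‖ ≤ 1) ↔
      (B ∘L adjoint B - A ∘L adjoint A).IsPositive := by
  have h := isPositive_adjoint_comp_self_sub_iff (adjoint B) (adjoint A)
  rw [adjoint_adjoint, adjoint_adjoint] at h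
  rw [h]
  constructor
  · rintro ⟨Z, rfl, hZ⟩ k
    rw [adjoint_comp, comp_apply]
    exact (adjoint Z).le_of_opNorm_le ((adjoint.norm_map Z).trans_le hZ) _ |>.trans_eq (one_mul _)
  · intro hAB
    obtain ⟨X, hX, hXB⟩ := exists_opNorm_le_comp_eq_of_norm_le zero_le_one
      fun k => (hAB k).trans_eq (one_mul _).symm
    refine ⟨adjoint X, ?_, (adjoint.norm_map X).trans_le hX⟩
    rw [← adjoint_adjoint B, ← adjoint_comp, hXB, adjoint_adjoint]

end Adjoint

section Blocks

variable {E E₁ E₂ F : Type*}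
  [NormedAddCommGroup E] [InnerProductSpace 𝕜 E] [NormedAddCommGroup F] [InnerProductSpace 𝕜 F]
  [NormedAddCommGroup E₁] [InnerProductSpace 𝕜 E₁] [NormedAddCommGroup E₂] [InnerProductSpace 𝕜 E₂]

def coprodL2 (A₁ : E₁ →L[𝕜] F) (A₂ : E₂ →L[𝕜] F) : WithLp 2 (E₁ × E₂) →L[𝕜] F :=
  A₁ ∘L WithLp.fstL 2 𝕜 E₁ E₂ + A₂ ∘L WithLp.sndL 2 𝕜 E₁ E₂

def prodL2 (Z₁ : E →L[𝕜] E₁) (Z₂ : E →L[𝕜] E₂) : E →L[𝕜] WithLp 2 (E₁ × E₂) :=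
  (WithLp.prodContinuousLinearEquiv 2 𝕜 E₁ E₂).symm ∘L Z₁.prod Z₂

@[simp] theorem coprodL2_apply (A₁ : E₁ →L[𝕜] F) (A₂ : E₂ →L[𝕜] F) (x : WithLp 2 (E₁ × E₂)) :
    A₁.coprodL2 A₂ x = A₁ x.fst + A₂ x.snd := rfl

@[simp] theorem prodL2_apply (Z₁ : E →L[𝕜] E₁) (Z₂ : E →L[𝕜] E₂) (x : E) :
    Z₁.prodL2 Z₂ x = WithLp.toLp 2 (Z₁ x, Z₂ x) := rfl

theorem coprodL2_comp_prodL2 (A₁ : E₁ →L[𝕜] F) (A₂ : E₂ →L[𝕜] F) (Z₁ : E →L[𝕜] E₁)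
    (Z₂ : E →L[𝕜] E₂) : A₁.coprodL2 A₂ ∘L Z₁.prodL2 Z₂ = A₁ ∘L Z₁ + A₂ ∘L Z₂ := rfl

theorem prodL2_fstL_comp_sndL_comp (Z : E →L[𝕜] WithLp 2 (E₁ × E₂)) :
    (WithLp.fstL 2 𝕜 E₁ E₂ ∘L Z).prodL2 (WithLp.sndL 2 𝕜 E₁ E₂ ∘L Z) = Z := rfl

variable [CompleteSpace E] [CompleteSpace E₁] [CompleteSpace E₂] [CompleteSpace F]

theorem adjoint_coprodL2 (A₁ : E₁ →L[𝕜] F) (A₂ : E₂ →L[𝕜] F) :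
    adjoint (A₁.coprodL2 A₂) = (adjoint A₁).prodL2 (adjoint A₂) := by
  refine ((eq_adjoint_iff _ _).mpr fun x y => ?_).symm
  simp [WithLp.prod_inner_apply, adjoint_inner_left, inner_add_right]

theorem adjoint_prodL2 (Z₁ : E →L[𝕜] E₁) (Z₂ : E →L[𝕜] E₂) :
    adjoint (Z₁.prodL2 Z₂) = (adjoint Z₁).coprodL2 (adjoint Z₂) := by
  rw [← adjoint_adjoint ((adjoint Z₁).coprodL2 (adjoint Z₂)), adjoint_coprodL2, adjoint_adjoint,
    adjoint_adjoint]

theorem coprodL2_comp_adjoint_coprodL2 (A₁ : E₁ →L[𝕜] F) (A₂ : E₂ →L[𝕜] F) :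
    A₁.coprodL2 A₂ ∘L adjoint (A₁.coprodL2 A₂) = A₁ ∘L adjoint A₁ + A₂ ∘L adjoint A₂ := by
  rw [adjoint_coprodL2, coprodL2_comp_prodL2]

theorem adjoint_prodL2_comp_prodL2 (Z₁ : E →L[𝕜] E₁) (Z₂ : E →L[𝕜] E₂) :
    adjoint (Z₁.prodL2 Z₂) ∘L Z₁.prodL2 Z₂ = adjoint Z₁ ∘L Z₁ + adjoint Z₂ ∘L Z₂ := by
  rw [adjoint_prodL2, coprodL2_comp_prodL2]

end Blocks

end ContinuousLinearMap

open ContinuousLinearMap in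
theorem douglas_muhly_pearcy {H0 H1 H2 K : Type*}
    [NormedAddCommGroup H0] [InnerProductSpace ℂ H0] [CompleteSpace H0]
    [NormedAddCommGroup H1] [InnerProductSpace ℂ H1] [CompleteSpace H1]
    [NormedAddCommGroup H2] [InnerProductSpace ℂ H2] [CompleteSpace H2]
    [NormedAddCommGroup K] [InnerProductSpace ℂ K] [CompleteSpace K]
    (A0 : H0 →L[ℂ] K) (A1 : H1 →L[ℂ] K) (A2 : H2 →L[ℂ] K) :
    (∃ (Z1 : H0 →L[ℂ] H1) (Z2 : H0 →L[ℂ] H2),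
        A1 ∘L Z1 + A2 ∘L Z2 = A0 ∧
        (1 - (adjoint Z1 ∘L Z1 + adjoint Z2 ∘L Z2)).IsPositive) ↔
      (A1 ∘L adjoint A1 + A2 ∘L adjoint A2 - A0 ∘L adjoint A0).IsPositive := by
  have hblock (Z1 : H0 →L[ℂ] H1) (Z2 : H0 →L[ℂ] H2) :
      (A1 ∘L Z1 + A2 ∘L Z2 = A0 ∧ (1 - (adjoint Z1 ∘L Z1 + adjoint Z2 ∘L Z2)).IsPositive) ↔
        (A1.coprodL2 A2 ∘L Z1.prodL2 Z2 = A0 ∧ ‖Z1.prodL2 Z2‖ ≤ 1) := by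
    rw [coprodL2_comp_prodL2, ← adjoint_prodL2_comp_prodL2,
      isPositive_one_sub_adjoint_comp_self_iff]
  simp_rw [hblock, ← coprodL2_comp_adjoint_coprodL2, ← exists_comp_eq_opNorm_le_one_iff]
  exact ⟨fun ⟨_, _, hZ⟩ => ⟨_, hZ⟩,
    fun ⟨Z, hZ⟩ => ⟨_, _, (prodL2_fstL_comp_sndL_comp Z).symm ▸ hZ⟩⟩
end

section
/- Let V, V_q, X be bounded operators on a complex Hilbert space K with V V* = I, (q V_q)(q V_q)* = I for a complex number q, ‖X‖ < 1, and V X = q • (X V_q). Then (D_{X*}^{-1} V D_{X*}) (D_{X*}^{-1} V D_{X*})* = I, i.e., D_{X*}^{-1} V D_{X*} is a co-isometry, where D_{X*} = (I − X X*)^{1/2}. -/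
/-!
With `A = 1 - X X*`, the intertwining `V X = X (q V_q)` and the two co-isometry relations give
`V A V* = V V* - X (q V_q)(q V_q)* X* = A`. Since `‖X‖ < 1`, `A` is strictly positive, so
`D = A^{1/2}` is a self-adjoint unit with `D D = A`, and then
`(D⁻¹ V D)(D⁻¹ V D)* = D⁻¹ (V A V*) D⁻¹ = D⁻¹ A D⁻¹ = 1`.
-/

theorem CStarAlgebra.isStrictlyPositive_one_sub_mul_star_of_norm_lt_one {A : Type*}
    [CStarAlgebra A] [PartialOrder A] [StarOrderedRing A] {a : A} (ha : ‖a‖ < 1) :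
    IsStrictlyPositive (1 - a * star a) := by
  have hgap : IsStrictlyPositive (algebraMap ℝ A (1 - ‖a‖ ^ 2)) :=
    isStrictlyPositive_algebraMap (by nlinarith [norm_nonneg a])
  refine hgap.of_le ?_
  rw [map_sub, map_one]
  exact sub_le_sub_left CStarAlgebra.mul_star_le_algebraMap_norm_sq 1

theorem mul_one_sub_mul_star_mul_star_of_mul_eq_mul {R : Type*} [Ring R] [StarRing R]
    {v w x : R} (hv : v * star v = 1) (hw : w * star w = 1) (hvx : v * x = x * w) :
    v * (1 - x * star x) * star v = 1 - x * star x := by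
  have hconj : v * (x * star x) * star v = x * star x := calc
    v * (x * star x) * star v = (v * x) * star (v * x) := by rw [star_mul]; noncomm_ring
    _ = x * (w * star w) * star x := by rw [hvx, star_mul]; noncomm_ring
    _ = x * star x := by rw [hw, mul_one]
  rw [mul_sub, sub_mul, mul_one, hv, hconj]

theorem IsSelfAdjoint.inverse_mul_mul_mul_star_eq_one {R : Type*} [Ring R] [StarRing R]
    {d v : R} (hd : IsSelfAdjoint d) (hdu : IsUnit d) (hv : v * (d * d) * star v = d * d) :
    Ring.inverse d * v * d * star (Ring.inverse d * v * d) = 1 := by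
  have hstar : star (Ring.inverse d * v * d) = d * star v * Ring.inverse d := by
    rw [star_mul, star_mul, hd.star_eq, ← Ring.inverse_star, hd.star_eq, mul_assoc]
  calc Ring.inverse d * v * d * star (Ring.inverse d * v * d)
      = Ring.inverse d * (v * (d * d) * star v) * Ring.inverse d := by rw [hstar]; noncomm_ring
    _ = (Ring.inverse d * d) * (d * Ring.inverse d) := by rw [hv]; noncomm_ring
    _ = 1 := by rw [Ring.inverse_mul_cancel d hdu, Ring.mul_inverse_cancel d hdu, one_mul]

theorem IsStrictlyPositive.inverse_sqrt_mul_mul_sqrt_mul_star_eq_one {A : Type*}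
    [CStarAlgebra A] [PartialOrder A] [StarOrderedRing A] {a v : A} (ha : IsStrictlyPositive a)
    (hv : v * a * star v = a) :
    Ring.inverse (CFC.sqrt a) * v * CFC.sqrt a *
      star (Ring.inverse (CFC.sqrt a) * v * CFC.sqrt a) = 1 := by
  refine (CFC.sqrt_nonneg a).isSelfAdjoint.inverse_mul_mul_mul_star_eq_one
    (ha.isUnit_cfcSqrt a) ?_
  rwa [CFC.sqrt_mul_sqrt_self a ha.nonneg]

set_option maxHeartbeats 1000000 in
set_option synthInstance.maxHeartbeats 200000 in
open ContinuousLinearMap in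
theorem conjugated_coisometry {K : Type*} [NormedAddCommGroup K]
    [InnerProductSpace ℂ K] [CompleteSpace K] (V Vq X : K →L[ℂ] K) (q : ℂ)
    (hV : V ∘L adjoint V = 1) (hVq : (q • Vq) ∘L adjoint (q • Vq) = 1)
    (hX : ‖X‖ < 1) (hint : V ∘L X = q • (X ∘L Vq)) :
    (Ring.inverse (CFC.sqrt (1 - X ∘L adjoint X)) ∘L V ∘L CFC.sqrt (1 - X ∘L adjoint X)) ∘L
        adjoint (Ring.inverse (CFC.sqrt (1 - X ∘L adjoint X)) ∘L V ∘L
          CFC.sqrt (1 - X ∘L adjoint X)) = 1 := by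
  simp only [← mul_def, ← star_eq_adjoint] at *
  have hVX : V * X = X * (q • Vq) := by rw [hint, mul_smul_comm]
  simpa only [mul_assoc] using
    (CStarAlgebra.isStrictlyPositive_one_sub_mul_star_of_norm_lt_one hX
      ).inverse_sqrt_mul_mul_sqrt_mul_star_eq_one
      (mul_one_sub_mul_star_mul_star_of_mul_eq_mul hV hVq hVX)
end
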